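/- arXiv:2203.06659 — 2 statements merged into one kernel-verified Lean document; each statement's English description precedes it below -/
import Mathlib

section
/- Let G be a one-vertex embedding scheme with orienting loop o and a one-sided non-orienting loop r, and let G′ be the scheme obtained from G by removing r and flipping one of its wedges (the one-sided loop move). Then o is an orienting loop of G′. -/
/-- A one-vertex embedding scheme: `n` loops, whose `2*n` half-edge ends occupy
(bijectively) the `2*n` cyclic positions around the unique vertex, together with a
signature for each loop (`sign e = true` means signature `-1`, i.e. the loop is
one-sided; `sign e = false` means signature `+1`, i.e. the loop is two-sided). -/
structure OneVertexScheme where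
  n : ℕ
  ends : Fin n ⊕ Fin n ≃ Fin (2 * n)
  sign : Fin n → Bool

namespace OneVertexScheme

variable (S : OneVertexScheme)

/-- The position of the first end of loop `e` in the rotation around the vertex. -/
def endA (e : Fin S.n) : Fin (2 * S.n) := S.ends (Sum.inl e)

/-- The position of the second end of loop `e` in the rotation around the vertex. -/
def endB (e : Fin S.n) : Fin (2 * S.n) := S.ends (Sum.inr e)

/-- Clockwise cyclic distance from position `a` to position `x`. -/
def cdist (a x : Fin (2 * S.n)) : ℕ := (x.val + 2 * S.n - a.val) % (2 * S.n)

/-- `x` lies strictly inside the wedge of loop `e` going clockwise from `endA e`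
to `endB e`. -/
def InWedge (e : Fin S.n) (x : Fin (2 * S.n)) : Prop :=
  0 < S.cdist (S.endA e) x ∧ S.cdist (S.endA e) x < S.cdist (S.endA e) (S.endB e)

/-- Auxiliary alternation relation: exactly one end of `f` lies strictly inside the
wedge of `e`. -/
def altAux (e f : Fin S.n) : Prop :=
  Xor' (S.InWedge e (S.endA f)) (S.InWedge e (S.endB f))

/-- The interleaving graph `I_G` of the scheme: one vertex per loop, two loops being
adjacent exactly when their ends alternate around the vertex. -/
def interleavingGraph : SimpleGraph (Fin S.n) := SimpleGraph.fromRel (fun e f => S.altAux e f)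

/-- The ends of the loops `e` and `f` alternate around the vertex. -/
def Alternate (e f : Fin S.n) : Prop := S.interleavingGraph.Adj e f

/-- The ends of the loop `e` enclose the ends of the loop `f`. -/
def Encloses (e f : Fin S.n) : Prop := e ≠ f ∧ ¬ S.Alternate e f

/-- A loop is one-sided if its signature is `-1`. -/
def OneSided (e : Fin S.n) : Prop := S.sign e = true

/-- A loop is two-sided if its signature is `+1`. -/
def TwoSided (e : Fin S.n) : Prop := S.sign e = false

/-- A one-vertex scheme is orientable iff every loop (cycle) of it is two-sided. -/
def Orientable : Prop := ∀ e, S.TwoSided e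

/-- A loop `o` is orienting: cutting the underlying surface along `o` yields a connected
orientable surface.  Combinatorially, the ends of `o` alternate with the ends of every
one-sided loop and enclose the ends of every two-sided loop of the scheme. -/
def IsOrienting (o : Fin S.n) : Prop :=
  ∀ e, e ≠ o → (S.Alternate o e ↔ S.OneSided e)

/-- A loop of a one-vertex scheme is separating iff it is two-sided and no other loop
alternates with it (equivalently, its mod 2 intersection number with every cycle
vanishes). -/
def Separating (s : Fin S.n) : Prop := S.TwoSided s ∧ ∀ e, e ≠ s → ¬ S.Alternate s e

/-- A contractible loop (in reduced form): a two-sided loop one of whose wedges contains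
no end of any other loop, so that it bounds a disk. -/
def Contractible (s : Fin S.n) : Prop :=
  S.TwoSided s ∧
    ((∀ e, e ≠ s → ¬ S.InWedge s (S.endA e) ∧ ¬ S.InWedge s (S.endB e)) ∨
     (∀ e, e ≠ s → S.InWedge s (S.endA e) ∧ S.InWedge s (S.endB e)))

/-- The successor rotation on the `2*n` cyclic positions around the vertex. -/
def rot : Equiv.Perm (Fin (2 * S.n)) := finRotate (2 * S.n)

/-- The involution exchanging the positions of the two ends of each loop. -/
def partner : Equiv.Perm (Fin (2 * S.n)) :=
  (S.ends.symm.trans (Equiv.sumComm _ _)).trans S.ends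

/-- The loop having an end at a given position. -/
def loopAt (p : Fin (2 * S.n)) : Fin S.n := Sum.elim id id (S.ends.symm p)

/-- One step of the face-tracing procedure on sided positions: traverse the loop whose
end is at the current position (flipping the side if the loop is one-sided) and turn to
the next corner around the vertex. -/
def faceStep : Fin (2 * S.n) × Bool → Fin (2 * S.n) × Bool :=
  fun x =>
    let s' := Bool.xor x.2 (S.sign (S.loopAt x.1))
    (if s' then S.rot (S.partner x.1) else S.rot.symm (S.partner x.1), s')

/-- Two sided positions lie on the boundary walk of the same face. -/
def faceRel (x y : Fin (2 * S.n) × Bool) : Prop :=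
  ∃ j k : ℕ, S.faceStep^[j] x = S.faceStep^[k] y

/-- The number of faces of the cellular embedding determined by the scheme (each face is
traced twice by the face-tracing procedure, once on each side). -/
noncomputable def numFaces : ℕ := Nat.card (Quot S.faceRel) / 2

/-- The Euler genus of the closed surface in which the scheme embeds cellularly:
`eg = 2 - χ = 2 - (1 - n + f)`. -/
noncomputable def eulerGenus : ℤ := 1 + (S.n : ℤ) - (S.numFaces : ℤ)

end OneVertexScheme

/-- A cross-cap drawing of a one-vertex scheme with `k` cross-caps, recorded through the
number of times each loop passes through each cross-cap.  A drawing realizing the scheme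
must in particular satisfy that a loop is one-sided exactly when it passes through an odd
total number of cross-caps. -/
structure CrossCapDrawing (S : OneVertexScheme) where
  k : ℕ
  passes : Fin S.n → Fin k → ℕ
  realizes : ∀ e, (S.sign e = true ↔ Odd (∑ c, passes e c))

/-- `S'` is obtained from `S` by removing the contractible loop `c`; `ι` identifies the
loops of `S'` with the loops of `S` other than `c`. -/
def IsContractibleLoopRemoval (S : OneVertexScheme) (c : Fin S.n) (S' : OneVertexScheme)
    (ι : Fin S'.n → Fin S.n) : Prop :=
  S.Contractible c ∧ S'.n + 1 = S.n ∧ Function.Injective ι ∧ (∀ e, ι e ≠ c) ∧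
  (∀ e, S'.sign e = S.sign (ι e)) ∧
  (∀ e f, S'.Alternate e f ↔ S.Alternate (ι e) (ι f))

/-- `S'` is obtained from `S` by the one-sided loop move on the one-sided loop `r`:
`r` is removed and one of its wedges is flipped.  `ι` identifies the loops of `S'` with
the loops of `S` other than `r`; the effect on the signatures and on the interleaving
graph is: every former neighbour of `r` changes sidedness, the subgraph induced by the
neighbours of `r` is complemented, and everything else is unchanged. -/
def IsOneSidedLoopMove (S : OneVertexScheme) (r : Fin S.n) (S' : OneVertexScheme)
    (ι : Fin S'.n → Fin S.n) : Prop :=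
  S.OneSided r ∧ S'.n + 1 = S.n ∧ Function.Injective ι ∧ (∀ e, ι e ≠ r) ∧
  (∀ e, S.Alternate r (ι e) → S'.sign e = !(S.sign (ι e))) ∧
  (∀ e, ¬ S.Alternate r (ι e) → S'.sign e = S.sign (ι e)) ∧
  (∀ e f, e ≠ f → S.Alternate r (ι e) → S.Alternate r (ι f) →
      (S'.Alternate e f ↔ ¬ S.Alternate (ι e) (ι f))) ∧
  (∀ e f, ¬ (S.Alternate r (ι e) ∧ S.Alternate r (ι f)) →
      (S'.Alternate e f ↔ S.Alternate (ι e) (ι f)))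

/-- An end of the loop `o` is immediately followed by an end of the loop `t` in the
rotation around the vertex. -/
def OneVertexScheme.AdjacentEnds (S : OneVertexScheme) (o t : Fin S.n) : Prop :=
  ∃ p q : Fin (2 * S.n), (p = S.endA o ∨ p = S.endB o) ∧ (q = S.endA t ∨ q = S.endB t) ∧
    (S.cdist p q = 1 ∨ S.cdist q p = 1)

/-- `S'` is obtained from `S` by replacing the loop `o` (one of whose ends is immediately
followed by an end of `t`) by the concatenation `o' = o·t` of `o` and `t`; `ι` is the
identification of the loops. -/
def IsConcatenationReplace (S : OneVertexScheme) (o t : Fin S.n) (S' : OneVertexScheme)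
    (ι : Fin S.n → Fin S'.n) : Prop :=
  o ≠ t ∧ S.AdjacentEnds o t ∧ S'.n = S.n ∧ Function.Bijective ι ∧
  (∀ e, e ≠ o → S'.sign (ι e) = S.sign e) ∧
  (S'.sign (ι o) = Bool.xor (S.sign o) (S.sign t)) ∧
  (∀ e f, e ≠ o → f ≠ o → (S'.Alternate (ι e) (ι f) ↔ S.Alternate e f)) ∧
  (∀ e, e ≠ o → e ≠ t → (S'.Alternate (ι o) (ι e) ↔ Xor' (S.Alternate o e) (S.Alternate t e))) ∧
  ¬ S'.Alternate (ι o) (ι t)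

/-- Let `G` be a one-vertex embedding scheme with orienting loop `o`
and a one-sided non-orienting loop `r`, and let `G'` be the scheme obtained from `G` by
removing `r` and flipping one of its wedges (the one-sided loop move).  Then `o` is an
orienting loop of `G'`. -/
theorem orienting_preserved_by_one_sided_move (S : OneVertexScheme) (o r : Fin S.n)
    (ho : S.IsOrienting o) (hr1 : S.OneSided r) (hr2 : ¬ S.IsOrienting r)
    (S' : OneVertexScheme) (ι : Fin S'.n → Fin S.n)
    (hmove : IsOneSidedLoopMove S r S' ι)
    (o' : Fin S'.n) (ho' : ι o' = o) :
    S'.IsOrienting o' := by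
  obtain ⟨hrone, hn, hinj, hne, hsflip, hskeep, haltflip, haltkeep⟩ := hmove
  have hro : r ≠ o := fun h => hr2 (h ▸ ho)
  have hor : S.Alternate o r := (ho r hro).mpr hr1
  have hro' : S.Alternate r (ι o') := by rw [ho']; exact hor.symm
  intro e he
  have hie : ι e ≠ o := fun h => he (hinj (h.trans ho'.symm))
  have hoe : S.Alternate o (ι e) ↔ S.OneSided (ι e) := ho (ι e) hie
  by_cases hA : S.Alternate r (ι e)
  · have h1 := haltflip o' e (fun h => he h.symm) hro' hA
    have h2 := hsflip e hA
    rw [h1, ho']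
    unfold OneVertexScheme.OneSided at *
    rw [h2, hoe]
    cases S.sign (ι e) <;> simp
  · have h1 := haltkeep o' e (fun h => hA h.2)
    rw [h1, ho']
    unfold OneVertexScheme.OneSided at *
    rw [hskeep e hA]
    exact hoe
end

section
/- Let G be a one-vertex embedding scheme whose loops are all either orienting or two-sided non-separating, with at least one of each. Then there is an orienting loop o immediately followed in the rotation by a two-sided non-separating loop t. If G′ is obtained from G by replacing o with the loop o′ that is the concatenation of o and t, and G″ is obtained from G′ by applying the one-sided loop move on o′, then t is an orienting loop of G″. -/
/-!
Since `o'` and `t` do not alternate, the one-sided loop move on `o'` leaves the alternations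
of `t` as they were in `G`. A loop `e` changes sidedness under the move iff it alternates with
`o' = o·t`, i.e. with exactly one of `o` and `t`; as `o` is orienting, `e` alternates with `o`
iff `e` is one-sided, so the two parities cancel and `e` ends up one-sided iff it alternates
with `t`. For the existence, walk around the vertex from an end of a loop that is not
two-sided non-separating to an end of one that is: at the first switch the loop just before is
orienting. If every loop is two-sided non-separating, any orienting loop together with the loop
following it will do.
-/

theorem Function.exists_not_and_apply_of_iterate {α : Type*} {f : α → α} {c : α → Prop} {x : α}
    (hx : ¬ c x) {k : ℕ} (hk : c (f^[k] x)) : ∃ p, ¬ c p ∧ c (f p) := by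
  induction k generalizing x with
  | zero => exact absurd hk hx
  | succ k ih =>
    by_cases hfx : c (f x)
    · exact ⟨x, hx, hfx⟩
    · exact ih hfx hk

lemma val_finRotate_add_sub_mod {m : ℕ} (hm : 2 ≤ m) (p : Fin m) :
    ((finRotate m p).val + m - p.val) % m = 1 := by
  obtain ⟨m, rfl⟩ : ∃ k, m = k + 2 := ⟨m - 2, by omega⟩
  rw [coe_finRotate]
  split_ifs with h
  · subst h; simp [Nat.mod_eq_of_lt]
  · have := p.isLt
    rw [show p.val + 1 + (m + 2) - p.val = 1 + (m + 2) by omega, Nat.add_mod_right]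
    simp [Nat.mod_eq_of_lt]

namespace OneVertexScheme

variable (S : OneVertexScheme)

lemma loopAt_endA (e : Fin S.n) : S.loopAt (S.endA e) = e := by
  simp [loopAt, endA]

lemma eq_endA_or_eq_endB_loopAt (p : Fin (2 * S.n)) :
    p = S.endA (S.loopAt p) ∨ p = S.endB (S.loopAt p) := by
  unfold loopAt endA endB
  rcases h : S.ends.symm p with e | e <;> obtain rfl := (Equiv.symm_apply_eq _).1 h <;> simp

lemma two_le_two_mul_n (p : Fin (2 * S.n)) : 2 ≤ 2 * S.n := by
  have := p.pos
  omega

lemma cdist_rot (p : Fin (2 * S.n)) : S.cdist p (S.rot p) = 1 :=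
  val_finRotate_add_sub_mod (S.two_le_two_mul_n p) p

lemma adjacentEnds_loopAt_rot (p : Fin (2 * S.n)) :
    S.AdjacentEnds (S.loopAt p) (S.loopAt (S.rot p)) :=
  ⟨p, S.rot p, S.eq_endA_or_eq_endB_loopAt p, S.eq_endA_or_eq_endB_loopAt _, .inl (S.cdist_rot p)⟩

lemma exists_iterate_rot_eq (p q : Fin (2 * S.n)) : ∃ k, S.rot^[k] p = q := by
  have hrot := isCycle_finRotate_of_le (S.two_le_two_mul_n p)
  have hsupp := support_finRotate_of_le (S.two_le_two_mul_n p)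
  obtain ⟨k, hk⟩ := (hrot.sameCycle (Equiv.Perm.mem_support.1 (hsupp ▸ Finset.mem_univ p))
    (Equiv.Perm.mem_support.1 (hsupp ▸ Finset.mem_univ q))).exists_nat_pow_eq
  exact ⟨k, by rwa [← Equiv.Perm.coe_pow]⟩

theorem exists_isOrienting_adjacentEnds
    (hall : ∀ e, S.IsOrienting e ∨ (S.TwoSided e ∧ ¬ S.Separating e))
    (hex1 : ∃ e, S.IsOrienting e) (hex2 : ∃ e, S.TwoSided e ∧ ¬ S.Separating e) :
    ∃ o t, S.IsOrienting o ∧ S.TwoSided t ∧ ¬ S.Separating t ∧ S.AdjacentEnds o t := by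
  obtain ⟨o₀, ho₀⟩ := hex1
  obtain ⟨t₀, ht₀⟩ := hex2
  let c : Fin (2 * S.n) → Prop := fun p ↦ S.TwoSided (S.loopAt p) ∧ ¬ S.Separating (S.loopAt p)
  by_cases hc : ∀ p, c p
  · refine ⟨o₀, S.loopAt (S.rot (S.endA o₀)), ho₀, (hc _).1, (hc _).2, ?_⟩
    simpa only [loopAt_endA] using S.adjacentEnds_loopAt_rot (S.endA o₀)
  · push Not at hc
    obtain ⟨p₀, hp₀⟩ := hc
    obtain ⟨k, hk⟩ := S.exists_iterate_rot_eq p₀ (S.endA t₀)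
    have hck : c (S.rot^[k] p₀) := by simpa only [c, hk, loopAt_endA] using ht₀
    obtain ⟨p, hp, hrp⟩ := Function.exists_not_and_apply_of_iterate hp₀ hck
    exact ⟨_, _, (hall _).resolve_right hp, hrp.1, hrp.2, S.adjacentEnds_loopAt_rot p⟩

end OneVertexScheme

theorem IsOneSidedLoopMove.oneSided_iff {S S' : OneVertexScheme} {r : Fin S.n}
    {ι : Fin S'.n → Fin S.n} (h : IsOneSidedLoopMove S r S' ι) (e : Fin S'.n) :
    S'.OneSided e ↔ Xor (S.OneSided (ι e)) (S.Alternate r (ι e)) := by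
  obtain ⟨-, -, -, -, hflip, hkeep, -⟩ := h
  unfold OneVertexScheme.OneSided
  by_cases hA : S.Alternate r (ι e)
  · rw [hflip e hA]
    cases S.sign (ι e) <;> simp [hA, xor_def]
  · simp [hkeep e hA, hA, xor_def]

theorem isOrienting_of_isOneSidedLoopMove_concatenation {S S' S'' : OneVertexScheme}
    {o t : Fin S.n} {ι : Fin S.n → Fin S'.n} {κ : Fin S''.n → Fin S'.n} (ho : S.IsOrienting o)
    (hcr : IsConcatenationReplace S o t S' ι) (hmv : IsOneSidedLoopMove S' (ι o) S'' κ)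
    {t'' : Fin S''.n} (ht'' : κ t'' = ι t) : S''.IsOrienting t'' := by
  intro e'' he''
  have hside := hmv.oneSided_iff e''
  obtain ⟨hot, -, -, hι, hsign, -, halt, halt_o, hnot⟩ := hcr
  obtain ⟨-, -, hκ, hκo, -, -, -, halt_keep⟩ := hmv
  obtain ⟨e, he⟩ := hι.2 (κ e'')
  have heo : e ≠ o := by rintro rfl; exact hκo e'' he.symm
  have het : e ≠ t := by rintro rfl; exact he'' (hκ (ht''.trans he)).symm
  have halt_te : S''.Alternate t'' e'' ↔ S.Alternate t e := by
    rw [halt_keep t'' e'' (fun h ↦ hnot (ht'' ▸ h.1)), ht'', ← he]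
    exact halt t e hot.symm heo
  have hside_e : S'.OneSided (κ e'') ↔ S.OneSided e := by
    rw [← he, OneVertexScheme.OneSided, hsign e heo]; rfl
  rw [halt_te, hside, hside_e, ← he, halt_o e heo het, ← ho e heo]
  simp only [Xor', xor_def]
  tauto

/-- Let `G` be a one-vertex embedding scheme whose loops are all
either orienting or two-sided non-separating, with at least one of each.  Then there is
an orienting loop `o` immediately followed in the rotation by a two-sided non-separating
loop `t`; and whenever `G'` is obtained from `G` by replacing such an `o` with the loop
`o'` that is the concatenation of `o` and `t`, and `G''` is obtained from `G'` by
applying the one-sided loop move on `o'`, the loop `t` is an orienting loop of `G''`. -/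
theorem concatenation_move_makes_t_orienting (S : OneVertexScheme)
    (hall : ∀ e, S.IsOrienting e ∨ (S.TwoSided e ∧ ¬ S.Separating e))
    (hex1 : ∃ e, S.IsOrienting e)
    (hex2 : ∃ e, S.TwoSided e ∧ ¬ S.Separating e) :
    (∃ o t, S.IsOrienting o ∧ S.TwoSided t ∧ ¬ S.Separating t ∧ S.AdjacentEnds o t) ∧
    (∀ o t : Fin S.n,
      S.IsOrienting o → S.TwoSided t → ¬ S.Separating t → S.AdjacentEnds o t →
      ∀ (S' : OneVertexScheme) (ι : Fin S.n → Fin S'.n),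
        IsConcatenationReplace S o t S' ι →
        ∀ (S'' : OneVertexScheme) (κ : Fin S''.n → Fin S'.n),
          IsOneSidedLoopMove S' (ι o) S'' κ →
          ∀ t'' : Fin S''.n, κ t'' = ι t → S''.IsOrienting t'') :=
  ⟨S.exists_isOrienting_adjacentEnds hall hex1 hex2,
    fun _ _ ho _ _ _ _ _ hcr _ _ hmv _ ht'' ↦
      isOrienting_of_isOneSidedLoopMove_concatenation ho hcr hmv ht''⟩
end
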